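/- arXiv:1007.3517 — 2 statements merged into one kernel-verified Lean document; each statement's English description precedes it below -/
import Mathlib

section
/- Let w', w'' be reduced words of the same permutation w ∈ S_n that differ by a braid (Reidemeister III) move, i.e. w' = (…, i, i+1, i, …) and w'' = (…, i+1, i, i+1, …). Then ε(w', x) = ε(w'', x) for every x ∈ PDI(w), hence ε(w'') = ε(w') and σ̃_{w'} = σ̃_{w''} in H_n^-. -/
/-- The defining relations of the Lipshitz–Ozsváth–Thurston algebra `H_{m+1}^-`. -/
inductive LOTRel (k : Type) [Field k] (m : ℕ) :
    FreeAlgebra k (Fin m) → FreeAlgebra k (Fin m) → Prop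
  | sq (i : Fin m) :
      LOTRel k m (FreeAlgebra.ι k i * FreeAlgebra.ι k i) 0
  | anticomm (i j : Fin m) (h : (i : ℕ) + 1 < j ∨ (j : ℕ) + 1 < i) :
      LOTRel k m (FreeAlgebra.ι k i * FreeAlgebra.ι k j + FreeAlgebra.ι k j * FreeAlgebra.ι k i) 0
  | braid (i j : Fin m) (h : (j : ℕ) = (i : ℕ) + 1) :
      LOTRel k m (FreeAlgebra.ι k i * FreeAlgebra.ι k j * FreeAlgebra.ι k i)
                 (FreeAlgebra.ι k j * FreeAlgebra.ι k i * FreeAlgebra.ι k j)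

/-- The Lipshitz–Ozsváth–Thurston algebra `H_{m+1}^-`. -/
abbrev LOT (k : Type) [Field k] (m : ℕ) := RingQuot (LOTRel k m)

/-- The generator `σ_i` of `H_{m+1}^-`. -/
noncomputable def lotSigma (k : Type) [Field k] (m : ℕ) (i : Fin m) : LOT k m :=
  RingQuot.mkAlgHom k (LOTRel k m) (FreeAlgebra.ι k i)

/-- `σ_{w'} = σ_{i_1} ⋯ σ_{i_r}` for a word `w' = (i_1, …, i_r)`. -/
noncomputable def sigmaWord (k : Type) [Field k] (m : ℕ) (l : List (Fin m)) : LOT k m :=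
  (l.map (lotSigma k m)).prod

/-- The simple transposition `s_i = (i, i+1) ∈ S_{m+1}`. -/
def sTrans (m : ℕ) (i : Fin m) : Equiv.Perm (Fin (m + 1)) :=
  Equiv.swap i.castSucc i.succ

/-- The permutation `s_{i_1} ⋯ s_{i_r}` associated to a word `(i_1, …, i_r)`. -/
def permOfWord (m : ℕ) (l : List (Fin m)) : Equiv.Perm (Fin (m + 1)) :=
  (l.map (sTrans m)).prod

/-- `l` is a reduced word of `w`: its product is `w` and it has minimal length. -/
def IsReducedWord (m : ℕ) (w : Equiv.Perm (Fin (m + 1))) (l : List (Fin m)) : Prop :=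
  permOfWord m l = w ∧ ∀ l' : List (Fin m), permOfWord m l' = w → l.length ≤ l'.length

/-- The ordered pair `(min, max)`. -/
def orderPair {N : ℕ} (u v : Fin N) : Fin N × Fin N := if u ≤ v then (u, v) else (v, u)

/-- The list of inversions of the word `l = (i_1, …, i_r)`, listed position by position:
the `t`-th entry is the inversion of `w = s_{i_1} ⋯ s_{i_r}` (a pair `(j_1, j_2)` of bottom
endpoints of strands, with `j_1 < j_2`) corresponding to the `t`-th crossing of the wire
diagram of `l`. -/
def invList (m : ℕ) : List (Fin m) → List (Fin (m + 1) × Fin (m + 1))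
  | [] => []
  | a :: rest =>
      orderPair ((permOfWord m rest)⁻¹ a.castSucc) ((permOfWord m rest)⁻¹ a.succ) ::
        invList m rest

/-- The set of pairs of disjoint inversions of `w`: quadruples `(j₁, j₂, k₁, k₂)`
(encoded as a pair of pairs) of four distinct numbers with `j₁ < j₂`, `w j₁ > w j₂`,
`k₁ < k₂`, `w k₁ > w k₂` and `j₁ < k₁`. -/
def PDI (m : ℕ) (w : Equiv.Perm (Fin (m + 1))) :
    Finset ((Fin (m + 1) × Fin (m + 1)) × (Fin (m + 1) × Fin (m + 1))) :=
  Finset.univ.filter (fun x =>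
    x.1.1 < x.1.2 ∧ w x.1.2 < w x.1.1 ∧
    x.2.1 < x.2.2 ∧ w x.2.2 < w x.2.1 ∧
    x.1.1 < x.2.1 ∧ x.1.1 ≠ x.2.2 ∧ x.1.2 ≠ x.2.1 ∧ x.1.2 ≠ x.2.2)

/-- `ε(w', x)` for a pair of disjoint inversions `x = ((j₁,j₂),(k₁,k₂))`:
`+1` if the position (crossing) of `(j₁,j₂)` occurs in the word `l = w'` to the right of
the position of `(k₁,k₂)`, and `-1` otherwise. -/
def epsAt (m : ℕ) (l : List (Fin m))
    (x : (Fin (m + 1) × Fin (m + 1)) × (Fin (m + 1) × Fin (m + 1))) : ℤ :=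
  if (invList m l).idxOf x.2 < (invList m l).idxOf x.1 then 1 else -1

/-- `ε(w') = ∏_{x ∈ PDI(w)} ε(w', x)`, where `w` is the permutation of the word `l = w'`. -/
def epsWord (m : ℕ) (l : List (Fin m)) : ℤ :=
  ∏ x ∈ PDI m (permOfWord m l), epsAt m l x

/-!
A braid move `i (i+1) i ↦ (i+1) i (i+1)` only touches three consecutive crossings of the wire
diagram. Before and after the move these are the crossings among the same three strands, and the
move lists them in reverse order; every other crossing keeps both its inversion and its position.
An element of `PDI` consists of two inversions on four distinct strands, so at most one of them is
a crossing of the window, and their relative order is unchanged. Hence `ε(w', x) = ε(w'', x)`,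
and `σ_{w'} = σ_{w''}` is the braid relation of `H_n^-`.
-/

namespace List
variable {α : Type*} [BEq α] [LawfulBEq α]

theorem idxOf_lt_idxOf_append_iff {A L L' : List α} {x y : α}
    (h : L.idxOf y < L.idxOf x ↔ L'.idxOf y < L'.idxOf x) :
    (A ++ L).idxOf y < (A ++ L).idxOf x ↔ (A ++ L').idxOf y < (A ++ L').idxOf x := by
  by_cases hx : x ∈ A <;> by_cases hy : y ∈ A <;>
    simp only [idxOf_append_of_mem, idxOf_append_of_notMem, hx, hy, not_false_eq_true]
  · have := idxOf_lt_length_iff.2 hx; omega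
  · have := idxOf_lt_length_iff.2 hy; omega
  · omega

theorem idxOf_lt_idxOf_perm_append_iff {W W' B : List α} (hW : W.Perm W') {x y : α}
    (hxy : x ∉ W ∨ y ∉ W) :
    (W ++ B).idxOf y < (W ++ B).idxOf x ↔ (W' ++ B).idxOf y < (W' ++ B).idxOf x := by
  have hmem (z : α) : z ∈ W' ↔ z ∈ W := hW.mem_iff.symm
  have hlen := hW.length_eq
  by_cases hx : x ∈ W <;> by_cases hy : y ∈ W
  · tauto
  · have := idxOf_lt_length_iff.2 hx
    have := idxOf_lt_length_iff.2 ((hmem x).2 hx)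
    simp only [idxOf_append_of_mem, idxOf_append_of_notMem, hx, hy, hmem, not_false_eq_true]
    omega
  · have := idxOf_lt_length_iff.2 hy
    have := idxOf_lt_length_iff.2 ((hmem y).2 hy)
    simp only [idxOf_append_of_mem, idxOf_append_of_notMem, hx, hy, hmem, not_false_eq_true]
    omega
  · simp only [idxOf_append_of_notMem, hx, hy, hmem, not_false_eq_true, hlen]

theorem idxOf_lt_idxOf_append_perm_append_iff {A W W' B : List α} (hW : W.Perm W') {x y : α}
    (hxy : x ∉ W ∨ y ∉ W) :
    (A ++ W ++ B).idxOf y < (A ++ W ++ B).idxOf x ↔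
      (A ++ W' ++ B).idxOf y < (A ++ W' ++ B).idxOf x := by
  simpa only [append_assoc] using
    idxOf_lt_idxOf_append_iff (idxOf_lt_idxOf_perm_append_iff (B := B) hW hxy)

end List

theorem orderPair_comm {N : ℕ} (u v : Fin N) : orderPair u v = orderPair v u := by
  unfold orderPair
  split_ifs <;> first | rfl | (ext <;> simp only <;> omega)

theorem orderPair_of_lt {N : ℕ} {u v : Fin N} (h : u < v) : orderPair u v = (u, v) :=
  if_pos h.le

theorem orderPair_mem {N : ℕ} {s : Finset (Fin N)} {u v : Fin N} (hu : u ∈ s) (hv : v ∈ s) :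
    (orderPair u v).1 ∈ s ∧ (orderPair u v).2 ∈ s := by
  unfold orderPair
  split_ifs <;> exact ⟨‹_›, ‹_›⟩

theorem orderPair_map {N N' : ℕ} (f : Fin N → Fin N') (u v : Fin N) :
    orderPair (f (orderPair u v).1) (f (orderPair u v).2) = orderPair (f u) (f v) := by
  by_cases h : u ≤ v
  · rw [show orderPair u v = (u, v) from if_pos h]
  · rw [show orderPair u v = (v, u) from if_neg h, orderPair_comm]

theorem prod_map_braid {M ι : Type*} [Monoid M] (f : ι → M) {i j : ι}
    (h : f i * f j * f i = f j * f i * f j) (a b : List ι) :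
    ((a ++ [i, j, i] ++ b).map f).prod = ((a ++ [j, i, j] ++ b).map f).prod := by
  simp only [List.map_append, List.prod_append, List.map_cons, List.map_nil, List.prod_cons,
    List.prod_nil, mul_one, ← mul_assoc, h]

section Words
variable {m : ℕ}

theorem permOfWord_append (a b : List (Fin m)) :
    permOfWord m (a ++ b) = permOfWord m a * permOfWord m b := by
  simp [permOfWord]

theorem sTrans_braid {i j : Fin m} (hadj : (j : ℕ) = (i : ℕ) + 1) :
    sTrans m i * sTrans m j * sTrans m i = sTrans m j * sTrans m i * sTrans m j := by
  have hj : j.castSucc = i.succ := Fin.ext (by simp [hadj])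
  have h01 : i.castSucc ≠ i.succ := Fin.castSucc_lt_succ.ne
  have h02 : i.castSucc ≠ j.succ := by simp [Fin.ext_iff, hadj]; omega
  have h12 : i.succ ≠ j.succ := by simp [Fin.ext_iff, hadj]
  simp only [sTrans, hj]
  rw [Equiv.swap_mul_swap_mul_swap h01 h02, Equiv.swap_comm i.castSucc i.succ,
    Equiv.swap_comm i.succ j.succ, Equiv.swap_mul_swap_mul_swap h12.symm h02.symm,
    Equiv.swap_comm]

theorem permOfWord_braid {i j : Fin m} (hadj : (j : ℕ) = (i : ℕ) + 1) (a b : List (Fin m)) :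
    permOfWord m (a ++ [i, j, i] ++ b) = permOfWord m (a ++ [j, i, j] ++ b) :=
  prod_map_braid (sTrans m) (sTrans_braid hadj) a b

theorem invList_append (a r : List (Fin m)) :
    invList m (a ++ r) =
      (invList m a).map (fun e => orderPair ((permOfWord m r)⁻¹ e.1) ((permOfWord m r)⁻¹ e.2))
        ++ invList m r := by
  induction a with
  | nil => rfl
  | cons x t ih =>
    rw [List.cons_append, invList, invList, ih, List.map_cons, List.cons_append,
      permOfWord_append, mul_inv_rev, orderPair_map]
    rfl

end Words

theorem PDI_not_both_mem {m : ℕ} {w : Equiv.Perm (Fin (m + 1))}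
    {x : (Fin (m + 1) × Fin (m + 1)) × (Fin (m + 1) × Fin (m + 1))} (hx : x ∈ PDI m w)
    {S : Finset (Fin (m + 1))} (hS : S.card ≤ 3) {W : List (Fin (m + 1) × Fin (m + 1))}
    (hW : ∀ e ∈ W, e.1 ∈ S ∧ e.2 ∈ S) : x.1 ∉ W ∨ x.2 ∉ W := by
  by_contra! h
  simp only [PDI, Finset.mem_filter, Finset.mem_univ, true_and] at hx
  obtain ⟨h11_12, -, h21_22, -, h11_21, h11_22, h12_21, h12_22⟩ := hx
  have hsub : {x.1.1, x.1.2, x.2.1, x.2.2} ⊆ S := by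
    simp only [Finset.insert_subset_iff, Finset.singleton_subset_iff]
    exact ⟨(hW _ h.1).1, (hW _ h.1).2, (hW _ h.2).1, (hW _ h.2).2⟩
  have hcard : ({x.1.1, x.1.2, x.2.1, x.2.2} : Finset (Fin (m + 1))).card = 4 :=
    Finset.card_eq_four.2 ⟨_, _, _, _, h11_12.ne, h11_21.ne, h11_22, h12_21, h12_22,
      h21_22.ne, rfl⟩
  have := Finset.card_le_card hsub
  omega

section Braid
variable {m : ℕ} {i j : Fin m}

theorem invList_braid (hadj : (j : ℕ) = (i : ℕ) + 1) :
    invList m [i, j, i] = [(i.succ, j.succ), (i.castSucc, j.succ), (i.castSucc, i.succ)] ∧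
      invList m [j, i, j] = (invList m [i, j, i]).reverse := by
  have hj : j.castSucc = i.succ := Fin.ext (by simp [hadj])
  have h01 : i.castSucc < i.succ := Fin.castSucc_lt_succ
  have h12 : i.succ < j.succ := by simp [Fin.lt_def, hadj]
  have h02 := h01.trans h12
  constructor <;>
    simp [invList, permOfWord, sTrans, hj, Equiv.swap_apply_of_ne_of_ne, orderPair_of_lt,
      h01, h12, h02, h01.ne, h12.ne', h02.ne, h02.ne']

theorem invList_braid_move (hadj : (j : ℕ) = (i : ℕ) + 1) (a b : List (Fin m)) :
    ∃ A W B : List (Fin (m + 1) × Fin (m + 1)),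
      invList m (a ++ [i, j, i] ++ b) = A ++ W ++ B ∧
      invList m (a ++ [j, i, j] ++ b) = A ++ W.reverse ++ B ∧
      ∃ S : Finset (Fin (m + 1)), S.card ≤ 3 ∧ ∀ e ∈ W, e.1 ∈ S ∧ e.2 ∈ S := by
  obtain ⟨hleft, hright⟩ := invList_braid hadj
  set p := (permOfWord m ([i, j, i] ++ b))⁻¹
  set q := (permOfWord m b)⁻¹
  refine ⟨(invList m a).map fun e => orderPair (p e.1) (p e.2),
    (invList m [i, j, i]).map fun e => orderPair (q e.1) (q e.2), invList m b,
    ?_, ?_, {q i.castSucc, q i.succ, q j.succ}, Finset.card_le_three, ?_⟩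
  · rw [List.append_assoc, invList_append, invList_append, List.append_assoc]
  · have hperm : permOfWord m ([i, j, i] ++ b) = permOfWord m ([j, i, j] ++ b) :=
      permOfWord_braid hadj [] b
    rw [List.append_assoc, invList_append, invList_append, hright, List.map_reverse, ← hperm,
      List.append_assoc]
  · intro e he
    rw [hleft] at he
    simp only [List.map_cons, List.map_nil, List.mem_cons, List.not_mem_nil, or_false] at he
    rcases he with rfl | rfl | rfl <;> exact orderPair_mem (by simp) (by simp)

theorem epsAt_braid (hadj : (j : ℕ) = (i : ℕ) + 1) (a b : List (Fin m))
    {w : Equiv.Perm (Fin (m + 1))}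
    {x : (Fin (m + 1) × Fin (m + 1)) × (Fin (m + 1) × Fin (m + 1))} (hx : x ∈ PDI m w) :
    epsAt m (a ++ [i, j, i] ++ b) x = epsAt m (a ++ [j, i, j] ++ b) x := by
  obtain ⟨A, W, B, hleft, hright, S, hS, hW⟩ := invList_braid_move hadj a b
  unfold epsAt
  rw [hleft, hright]
  exact if_congr (List.idxOf_lt_idxOf_append_perm_append_iff (List.reverse_perm W).symm
    (PDI_not_both_mem hx hS hW)) rfl rfl

theorem epsWord_braid (hadj : (j : ℕ) = (i : ℕ) + 1) (a b : List (Fin m)) :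
    epsWord m (a ++ [j, i, j] ++ b) = epsWord m (a ++ [i, j, i] ++ b) := by
  unfold epsWord
  rw [← permOfWord_braid hadj a b]
  exact Finset.prod_congr rfl fun x hx => (epsAt_braid hadj a b hx).symm

theorem sigmaWord_braid (k : Type) [Field k] (hadj : (j : ℕ) = (i : ℕ) + 1)
    (a b : List (Fin m)) :
    sigmaWord k m (a ++ [i, j, i] ++ b) = sigmaWord k m (a ++ [j, i, j] ++ b) := by
  refine prod_map_braid (lotSigma k m) ?_ a b
  simpa only [lotSigma, map_mul] using RingQuot.mkAlgHom_rel k (LOTRel.braid (k := k) i j hadj)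

end Braid

theorem stmt2_general (k : Type) [Field k] (m : ℕ) (a b : List (Fin m)) (i j : Fin m)
    (hadj : (j : ℕ) = (i : ℕ) + 1)
    (w : Equiv.Perm (Fin (m + 1))) :
    let l' := a ++ [i, j, i] ++ b
    let l'' := a ++ [j, i, j] ++ b
    (∀ x ∈ PDI m w, epsAt m l' x = epsAt m l'' x) ∧
    epsWord m l'' = epsWord m l' ∧
    epsWord m l' • sigmaWord k m l' = epsWord m l'' • sigmaWord k m l'' := by
  refine ⟨fun x hx => epsAt_braid hadj a b hx, epsWord_braid hadj a b, ?_⟩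
  rw [epsWord_braid hadj a b, sigmaWord_braid k hadj a b]

theorem stmt2 (k : Type) [Field k] (m : ℕ) (a b : List (Fin m)) (i j : Fin m)
    (hadj : (j : ℕ) = (i : ℕ) + 1)
    (w : Equiv.Perm (Fin (m + 1)))
    (hw' : IsReducedWord m w (a ++ [i, j, i] ++ b))
    (hw'' : IsReducedWord m w (a ++ [j, i, j] ++ b)) :
    let l' := a ++ [i, j, i] ++ b
    let l'' := a ++ [j, i, j] ++ b
    (∀ x ∈ PDI m w, epsAt m l' x = epsAt m l'' x) ∧
    epsWord m l'' = epsWord m l' ∧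
    epsWord m l' • sigmaWord k m l' = epsWord m l'' • sigmaWord k m l'' :=
  stmt2_general k m a b i j hadj w
end

section
/- In U_q^+ = U_q^+(gl(1|2)), any monomial in the generators containing E_1 at least three times vanishes; equivalently, E_1 E_2^{a} E_1 E_2^{b} E_1 = 0 for all integers a, b ≥ 0. -/
/-- The ground field `ℚ(q)` of rational functions. -/
abbrev Fq : Type := RatFunc ℚ

/-- The variable `q ∈ ℚ(q)`. -/
noncomputable def qq : Fq := RatFunc.X

/-- The defining relations of `U_q^+(gl(1|2))`:
`E₁² = 0` and `(q + q⁻¹) E₂E₁E₂ = E₁E₂² + E₂²E₁`, where `E₁ = ι 0`, `E₂ = ι 1`. -/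
inductive UqRel : FreeAlgebra Fq (Fin 2) → FreeAlgebra Fq (Fin 2) → Prop
  | oneSq : UqRel (FreeAlgebra.ι Fq 0 * FreeAlgebra.ι Fq 0) 0
  | serre : UqRel
      ((qq + qq⁻¹) • (FreeAlgebra.ι Fq 1 * FreeAlgebra.ι Fq 0 * FreeAlgebra.ι Fq 1))
      (FreeAlgebra.ι Fq 0 * FreeAlgebra.ι Fq 1 * FreeAlgebra.ι Fq 1 +
        FreeAlgebra.ι Fq 1 * FreeAlgebra.ι Fq 1 * FreeAlgebra.ι Fq 0)

/-- The algebra `U_q^+ = U_q^+(gl(1|2))`. -/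
abbrev Uq : Type := RingQuot UqRel

/-- The generator `E₁` (odd). -/
noncomputable def E₁ : Uq := RingQuot.mkAlgHom Fq UqRel (FreeAlgebra.ι Fq 0)

/-- The generator `E₂` (even). -/
noncomputable def E₂ : Uq := RingQuot.mkAlgHom Fq UqRel (FreeAlgebra.ι Fq 1)

/-- The quantum integer `[j] = (q^j - q^{-j})/(q - q^{-1})`. -/
noncomputable def qInt (j : ℕ) : Fq := (qq ^ j - qq⁻¹ ^ j) / (qq - qq⁻¹)

/-- The quantum factorial `[j]! = [1][2]⋯[j]`. -/
noncomputable def qFact (j : ℕ) : Fq := ∏ t ∈ Finset.range j, qInt (t + 1)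

/-- The quantum binomial `[a choose b] = [a]!/([b]![a-b]!)`. -/
noncomputable def qBinom (a b : ℕ) : Fq := qFact a / (qFact b * qFact (a - b))

/-- The quantum divided power `E₂^{(j)} = E₂^j / [j]!`. -/
noncomputable def E₂pow (j : ℕ) : Uq := (qFact j)⁻¹ • E₂ ^ j

/-!
Write `e = E₁`, `f = E₂` and `[2] = q + q⁻¹`. Multiplying the Serre relation
`[2] f e f = e f² + f² e` on the right by `f^a` (resp. on the left by `f^b`) expresses
`e f^(a+2)` through `e f^(a+1)` and `e f^a` (resp. `f^(b+2) e` through `f^(b+1) e` and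
`f^b e`). Hence `e f^a e f^b e = 0` for all `a, b` once it holds for `a, b ≤ 1`. Three of
these four cases contain `e²`, and the last one is `[2] e f e f e = e (e f² + f² e) e = 0`.
A word with at least three letters `E₁` contains a factor `E₁ E₂^a E₁ E₂^b E₁`.
-/

section SerreRelation

variable {K A : Type*} [CommRing K] [Ring A] [Algebra K A] {c : K} {e f : A}

theorem mul_pow_add_two_of_serre (hs : c • (f * e * f) = e * f * f + f * f * e) (a : ℕ) :
    e * f ^ (a + 2) = c • (f * (e * f ^ (a + 1))) - f * f * (e * f ^ a) := by
  have : e * f ^ (a + 2) = (e * f * f) * f ^ a := by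
    rw [add_comm, pow_add, pow_two]; simp only [mul_assoc]
  rw [this, eq_sub_of_add_eq hs.symm, sub_mul, smul_mul_assoc, pow_succ']
  noncomm_ring

theorem pow_add_two_mul_of_serre (hs : c • (f * e * f) = e * f * f + f * f * e) (b : ℕ) :
    f ^ (b + 2) * e = c • (f ^ b * f * e * f) - f ^ b * e * f * f := by
  have : f ^ (b + 2) * e = f ^ b * (f * f * e) := by rw [pow_add, pow_two]; simp only [mul_assoc]
  rw [this, eq_sub_of_add_eq' hs.symm, mul_sub, mul_smul_comm]
  noncomm_ring

theorem mul_pow_mul_eq_zero_of_serre_left (hs : c • (f * e * f) = e * f * f + f * f * e)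
    {y : A} (h₀ : e * y = 0) (h₁ : e * f * y = 0) (a : ℕ) : e * f ^ a * y = 0 := by
  induction a using Nat.twoStepInduction with
  | zero => simpa using h₀
  | one => simpa using h₁
  | more a ha ha₁ =>
    rw [mul_pow_add_two_of_serre hs, sub_mul, smul_mul_assoc]
    simp only [mul_assoc] at ha ha₁ ⊢
    rw [ha, ha₁]
    simp

theorem mul_pow_mul_eq_zero_of_serre_right (hs : c • (f * e * f) = e * f * f + f * f * e)
    {y : A} (h₀ : y * e = 0) (h₁ : y * f * e = 0) (b : ℕ) : y * f ^ b * e = 0 := by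
  induction b using Nat.twoStepInduction with
  | zero => simpa using h₀
  | one => simpa using h₁
  | more b hb hb₁ =>
    rw [mul_assoc, pow_add_two_mul_of_serre hs, mul_sub, mul_smul_comm]
    have hb₁' : y * (f ^ b * f * e * f) = 0 := by
      rw [← pow_succ, ← mul_assoc, ← mul_assoc, hb₁, zero_mul]
    have hb' : y * (f ^ b * e * f * f) = 0 := by
      simp only [← mul_assoc, hb, zero_mul]
    rw [hb₁', hb', smul_zero, sub_zero]

end SerreRelation

theorem mul_pow_mul_pow_mul_eq_zero_of_serre {K A : Type*} [Field K] [Ring A] [Algebra K A]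
    {c : K} {e f : A} (he : e * e = 0)
    (hs : c • (f * e * f) = e * f * f + f * f * e) (hc : c ≠ 0) (a b : ℕ) :
    e * f ^ a * e * f ^ b * e = 0 := by
  have hefefe : e * f * e * f * e = 0 := by
    refine (smul_eq_zero.mp ?_).resolve_left hc
    calc c • (e * f * e * f * e) = e * (c • (f * e * f)) * e := by
          rw [mul_smul_comm, smul_mul_assoc]; simp only [mul_assoc]
      _ = e * e * f * f * e + e * f * f * (e * e) := by rw [hs]; noncomm_ring
      _ = 0 := by rw [he, mul_zero, zero_mul, zero_mul, zero_mul, add_zero]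
  have hright : ∀ b, e * f * e * f ^ b * e = 0 :=
    mul_pow_mul_eq_zero_of_serre_right hs (by rw [mul_assoc, he, mul_zero]) hefefe
  have := mul_pow_mul_eq_zero_of_serre_left hs (y := e * f ^ b * e)
    (by simp only [← mul_assoc, he, zero_mul]) (by simpa only [mul_assoc] using hright b) a
  simpa only [mul_assoc] using this

theorem qq_add_inv_ne_zero : qq + qq⁻¹ ≠ 0 := by
  have hq : qq ≠ 0 := RatFunc.X_ne_zero
  have hsq : qq ^ 2 + 1 ≠ 0 := by
    have := RatFunc.algebraMap_ne_zero (Polynomial.X_pow_add_C_ne_zero two_pos (1 : ℚ))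
    simpa [qq] using this
  contrapose! hsq
  calc qq ^ 2 + 1 = qq * (qq + qq⁻¹) := by field_simp
    _ = 0 := by rw [hsq, mul_zero]

theorem E₁_mul_E₁ : E₁ * E₁ = 0 := by
  simpa only [E₁, map_mul, map_zero] using RingQuot.mkAlgHom_rel Fq UqRel.oneSq

theorem serre_E₁_E₂ : (qq + qq⁻¹) • (E₂ * E₁ * E₂) = E₁ * E₂ * E₂ + E₂ * E₂ * E₁ := by
  simpa only [E₁, E₂, map_smul, map_add, map_mul] using RingQuot.mkAlgHom_rel Fq UqRel.serre

theorem E₁_mul_pow_mul_pow_mul_eq_zero (a b : ℕ) : E₁ * E₂ ^ a * E₁ * E₂ ^ b * E₁ = 0 :=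
  mul_pow_mul_pow_mul_eq_zero_of_serre E₁_mul_E₁ serre_E₁_E₂ qq_add_inv_ne_zero a b

noncomputable def monomial (l : List (Fin 2)) : Uq :=
  (l.map fun i : Fin 2 => if i = 0 then E₁ else E₂).prod

theorem monomial_replicate_append_cons (k : ℕ) (r : List (Fin 2)) :
    monomial (List.replicate k 1 ++ 0 :: r) = E₂ ^ k * E₁ * monomial r := by
  simp [monomial, List.map_replicate, mul_assoc]

theorem exists_eq_replicate_one_append_zero_cons :
    ∀ l : List (Fin 2), 0 ∈ l → ∃ k r, l = List.replicate k 1 ++ 0 :: r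
  | [], h => absurd h List.not_mem_nil
  | 0 :: r, _ => ⟨0, r, rfl⟩
  | 1 :: l, h => by
    obtain ⟨k, r, rfl⟩ := exists_eq_replicate_one_append_zero_cons l (by simpa using h)
    exact ⟨k + 1, r, rfl⟩

theorem monomial_eq_zero_of_three_le_count (l : List (Fin 2)) (hl : 3 ≤ l.count 0) :
    monomial l = 0 := by
  have split (l : List (Fin 2)) (n : ℕ) (h : n + 1 ≤ l.count 0) :
      ∃ k r, l = List.replicate k 1 ++ 0 :: r ∧ n ≤ r.count 0 := by
    obtain ⟨k, r, rfl⟩ :=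
      exists_eq_replicate_one_append_zero_cons l (List.count_pos_iff.mp (by omega))
    refine ⟨k, r, rfl, ?_⟩
    simpa [List.count_append, List.count_replicate] using h
  obtain ⟨k, r₁, rfl, h₁⟩ := split l 2 hl
  obtain ⟨a, r₂, rfl, h₂⟩ := split r₁ 1 h₁
  obtain ⟨b, r₃, rfl, -⟩ := split r₂ 0 h₂
  simp only [monomial_replicate_append_cons]
  calc E₂ ^ k * E₁ * (E₂ ^ a * E₁ * (E₂ ^ b * E₁ * monomial r₃))
      = E₂ ^ k * (E₁ * E₂ ^ a * E₁ * E₂ ^ b * E₁) * monomial r₃ := by simp only [mul_assoc]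
    _ = 0 := by rw [E₁_mul_pow_mul_pow_mul_eq_zero, mul_zero, zero_mul]

theorem stmt17 :
    (∀ l : List (Fin 2), 3 ≤ l.count 0 →
      (l.map fun i : Fin 2 => if i = 0 then E₁ else E₂).prod = 0) ∧
    (∀ a b : ℕ, E₁ * E₂ ^ a * E₁ * E₂ ^ b * E₁ = 0) :=
  ⟨monomial_eq_zero_of_three_le_count, E₁_mul_pow_mul_pow_mul_eq_zero⟩
end
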